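/- arXiv:1303.7295 — 3 statements merged into one kernel-verified Lean document; each statement's English description precedes it below -/
import Mathlib

section
/- For every ε₁ ∈ (0,1) there exist constants ε₂ > 0 and ε₂' > 0, depending only on ε₁, such that for all positive integers m₁ and m₂ the following holds: if h_A ∈ ℝ^{m₁} and h_B ∈ ℝ^{m₂} are independent random vectors with i.i.d. standard normal entries, then P( √(‖h_A‖₂² + ‖(h_B)₊‖₂²) > (1−ε₁)√(m₁ + m₂/2) ) ≥ 1 − e^{−ε₂ (m₁ + m₂/2)} and P( √(‖h_A‖₂² + ‖(h_B)₊‖₂²) < (1+ε₁)√(m₁ + m₂/2) ) ≥ 1 − e^{−ε₂' (m₁ + m₂/2)}. -/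
/-!
Chernoff's method for `S = ‖h_A‖² + ‖(h_B)₊‖²` and `N = m₁ + m₂ / 2`. For `c < 1/2` a Gaussian
integral gives `E e^{c h²} = (1 - 2c)^{-1/2} =: M(c)`, and since `h ↦ -h` preserves `N(0, 1)` and
`e^{c h₊²} + e^{c (-h)₊²} = 1 + e^{c h²}`, also `E e^{c h₊²} = (1 + M(c)) / 2`. For `c ≤ 1/4`,
`M(c) ≤ 1 + c + 4c²`, whence `E e^{cS} ≤ e^{(c + 4c²) N}`. Markov's inequality for `e^{cS}` with
`c = (r - 1) / 12` bounds both `P(S ≤ rN)` (for `r ≤ 1`) and `P(S ≥ rN)` (for `1 ≤ r ≤ 4`) by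
`e^{-(r - 1)² N / 18}`; take `r = (1 ∓ ε₁)²`.
-/

open MeasureTheory ProbabilityTheory

/-- Law of a random vector in `ℝ^k` with i.i.d. standard normal entries. -/
noncomputable def gaussVec (k : ℕ) : Measure (Fin k → ℝ) :=
  Measure.pi fun _ => gaussianReal 0 1

open Real
open scoped NNReal

instance isNegInvariant_gaussianReal_zero (v : ℝ≥0) : (gaussianReal 0 v).IsNegInvariant :=
  ⟨gaussianReal_map_neg.trans (by rw [neg_zero])⟩

-- Also true for `c ≥ 1 / 2`, where both sides are junk zeros.
lemma integral_exp_mul_sq_gaussianReal (c : ℝ) :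
    ∫ x, exp (c * x ^ 2) ∂gaussianReal 0 1 = (√(1 - 2 * c))⁻¹ := by
  have hpdf : ∀ x, gaussianPDFReal 0 1 x • exp (c * x ^ 2)
      = (√(2 * π))⁻¹ * exp (-(1 / 2 - c) * x ^ 2) := fun x => by
    rw [gaussianPDFReal, smul_eq_mul, mul_assoc, ← exp_add]
    simp only [NNReal.coe_one, mul_one, sub_zero]
    ring_nf
  rw [integral_gaussianReal_eq_integral_smul one_ne_zero, funext hpdf, integral_const_mul,
    integral_gaussian, ← sqrt_inv, ← sqrt_mul (by positivity), ← sqrt_inv]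
  congr 1
  field_simp

lemma integrable_exp_mul_sq_gaussianReal {c : ℝ} (hc : c < 1 / 2) :
    Integrable (fun x => exp (c * x ^ 2)) (gaussianReal 0 1) :=
  .of_integral_ne_zero <| by
    rw [integral_exp_mul_sq_gaussianReal]
    have : 0 < 1 - 2 * c := by linarith
    positivity

lemma exp_mul_sq_max_add_exp_mul_sq_max_neg (c x : ℝ) :
    exp (c * max x 0 ^ 2) + exp (c * max (-x) 0 ^ 2) = 1 + exp (c * x ^ 2) := by
  rcases le_total x 0 with hx | hx
  · simp [max_eq_right hx, max_eq_left (neg_nonneg.2 hx)]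
  · simp [max_eq_left hx, max_eq_right (neg_nonpos.2 hx), add_comm]

lemma integrable_exp_mul_sq_max_gaussianReal {c : ℝ} (hc : c < 1 / 2) :
    Integrable (fun x => exp (c * max x 0 ^ 2)) (gaussianReal 0 1) := by
  refine ((integrable_const 1).add (integrable_exp_mul_sq_gaussianReal hc)).mono'
    (by fun_prop) (.of_forall fun x => ?_)
  rw [norm_of_nonneg (exp_pos _).le, Pi.add_apply, ← exp_mul_sq_max_add_exp_mul_sq_max_neg]
  exact le_add_of_nonneg_right (exp_pos _).le

lemma integral_exp_mul_sq_max_gaussianReal {c : ℝ} (hc : c < 1 / 2) :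
    ∫ x, exp (c * max x 0 ^ 2) ∂gaussianReal 0 1 = (1 + (√(1 - 2 * c))⁻¹) / 2 := by
  have hint := integrable_exp_mul_sq_max_gaussianReal hc
  have hsum : (∫ x, exp (c * max x 0 ^ 2) ∂gaussianReal 0 1)
      + ∫ x, exp (c * max (-x) 0 ^ 2) ∂gaussianReal 0 1 = 1 + (√(1 - 2 * c))⁻¹ := by
    rw [← integral_add hint hint.comp_neg]
    simp_rw [exp_mul_sq_max_add_exp_mul_sq_max_neg]
    rw [integral_add (integrable_const 1) (integrable_exp_mul_sq_gaussianReal hc),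
      integral_exp_mul_sq_gaussianReal, integral_const, probReal_univ, one_smul]
  rw [integral_neg_eq_self (fun x => exp (c * max x 0 ^ 2))] at hsum
  linarith

lemma inv_sqrt_one_sub_two_mul_le {c : ℝ} (hc : c ≤ 1 / 4) :
    (√(1 - 2 * c))⁻¹ ≤ 1 + c + 4 * c ^ 2 := by
  have hpos : 0 < 1 - 2 * c := by linarith
  -- `(1 + c + 4c²)² (1 - 2c) = 1 + c² (5 - 10c - 32c³)`
  have hpoly : 0 ≤ 5 - 10 * c - 32 * c ^ 3 := by nlinarith [sq_nonneg c, sq_nonneg (c - 1 / 4)]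
  rw [inv_le_iff_one_le_mul₀ (sqrt_pos.2 hpos), ← sqrt_sq (by nlinarith : 0 ≤ 1 + c + 4 * c ^ 2),
    ← sqrt_mul (by positivity), one_le_sqrt]
  nlinarith [mul_nonneg (sq_nonneg c) hpoly]

noncomputable def sqNormAddPosSqNorm {m₁ m₂ : ℕ} (ω : (Fin m₁ → ℝ) × (Fin m₂ → ℝ)) : ℝ :=
  ∑ i, ω.1 i ^ 2 + ∑ j, max (ω.2 j) 0 ^ 2

@[fun_prop]
lemma measurable_sqNormAddPosSqNorm (m₁ m₂ : ℕ) :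
    Measurable (sqNormAddPosSqNorm : (Fin m₁ → ℝ) × (Fin m₂ → ℝ) → ℝ) := by
  unfold sqNormAddPosSqNorm
  fun_prop

instance isProbabilityMeasure_gaussVec (k : ℕ) : IsProbabilityMeasure (gaussVec k) := by
  unfold gaussVec
  infer_instance

lemma exp_mul_sqNormAddPosSqNorm {m₁ m₂ : ℕ} (c : ℝ) (ω : (Fin m₁ → ℝ) × (Fin m₂ → ℝ)) :
    exp (c * sqNormAddPosSqNorm ω)
      = (∏ i, exp (c * ω.1 i ^ 2)) * ∏ j, exp (c * max (ω.2 j) 0 ^ 2) := by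
  rw [sqNormAddPosSqNorm, ← exp_sum, ← exp_sum, ← exp_add, mul_add, Finset.mul_sum,
    Finset.mul_sum]

lemma integrable_exp_mul_sqNormAddPosSqNorm {c : ℝ} (hc : c < 1 / 2) (m₁ m₂ : ℕ) :
    Integrable (fun ω => exp (c * sqNormAddPosSqNorm ω)) ((gaussVec m₁).prod (gaussVec m₂)) := by
  simp_rw [exp_mul_sqNormAddPosSqNorm]
  exact (Integrable.fintype_prod fun _ => integrable_exp_mul_sq_gaussianReal hc).mul_prod
    (Integrable.fintype_prod fun _ => integrable_exp_mul_sq_max_gaussianReal hc)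

lemma integral_exp_mul_sqNormAddPosSqNorm {c : ℝ} (hc : c < 1 / 2) (m₁ m₂ : ℕ) :
    ∫ ω, exp (c * sqNormAddPosSqNorm ω) ∂(gaussVec m₁).prod (gaussVec m₂)
      = (√(1 - 2 * c))⁻¹ ^ m₁ * ((1 + (√(1 - 2 * c))⁻¹) / 2) ^ m₂ := by
  simp_rw [exp_mul_sqNormAddPosSqNorm]
  rw [integral_prod_mul (fun x : Fin m₁ → ℝ => ∏ i, exp (c * x i ^ 2))
    (fun y : Fin m₂ → ℝ => ∏ j, exp (c * max (y j) 0 ^ 2)), gaussVec, gaussVec,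
    integral_fintype_prod_eq_pow fun x => exp (c * x ^ 2),
    integral_fintype_prod_eq_pow fun x => exp (c * max x 0 ^ 2), integral_exp_mul_sq_gaussianReal,
    integral_exp_mul_sq_max_gaussianReal hc, Fintype.card_fin, Fintype.card_fin]

lemma integral_exp_mul_sqNormAddPosSqNorm_le {c : ℝ} (hc : c ≤ 1 / 4) (m₁ m₂ : ℕ) :
    ∫ ω, exp (c * sqNormAddPosSqNorm ω) ∂(gaussVec m₁).prod (gaussVec m₂)
      ≤ exp ((c + 4 * c ^ 2) * (m₁ + m₂ / 2)) := by
  set M := (√(1 - 2 * c))⁻¹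
  set y := c + 4 * c ^ 2
  have hM : M ≤ 1 + y := by linarith [inv_sqrt_one_sub_two_mul_le hc]
  have hA : M ≤ exp y := by linarith [add_one_le_exp y]
  have hB : (1 + M) / 2 ≤ exp (y / 2) := by linarith [add_one_le_exp (y / 2)]
  calc ∫ ω, exp (c * sqNormAddPosSqNorm ω) ∂(gaussVec m₁).prod (gaussVec m₂)
      = M ^ m₁ * ((1 + M) / 2) ^ m₂ := integral_exp_mul_sqNormAddPosSqNorm (by linarith) m₁ m₂
    _ ≤ exp y ^ m₁ * exp (y / 2) ^ m₂ := by gcongr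
    _ = exp (y * (m₁ + m₂ / 2)) := by
      rw [← exp_nat_mul, ← exp_nat_mul, ← exp_add]
      ring_nf

lemma measureReal_le_mul_sqNormAddPosSqNorm_le {c : ℝ} (hc : c ≤ 1 / 4) (q : ℝ) (m₁ m₂ : ℕ) :
    ((gaussVec m₁).prod (gaussVec m₂)).real {ω | q ≤ c * sqNormAddPosSqNorm ω}
      ≤ exp (-q + (c + 4 * c ^ 2) * (m₁ + m₂ / 2)) := by
  have hint := integrable_exp_mul_sqNormAddPosSqNorm (by linarith : c < 1 / 2) m₁ m₂
  calc _ ≤ exp (-1 * q) * mgf (fun ω => c * sqNormAddPosSqNorm ω) _ 1 :=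
        measure_ge_le_exp_mul_mgf q zero_le_one (by simpa only [one_mul] using hint)
    _ ≤ exp (-q) * exp ((c + 4 * c ^ 2) * (m₁ + m₂ / 2)) := by
        simp only [mgf, neg_one_mul, one_mul]
        gcongr
        exact integral_exp_mul_sqNormAddPosSqNorm_le hc m₁ m₂
    _ = _ := (exp_add _ _).symm

lemma measureReal_sqNormAddPosSqNorm_le_le {r : ℝ} (hr : r ≤ 1) (m₁ m₂ : ℕ) :
    ((gaussVec m₁).prod (gaussVec m₂)).real {ω | sqNormAddPosSqNorm ω ≤ r * (m₁ + m₂ / 2)}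
      ≤ exp (-((r - 1) ^ 2 / 18) * (m₁ + m₂ / 2)) := by
  calc ((gaussVec m₁).prod (gaussVec m₂)).real {ω | sqNormAddPosSqNorm ω ≤ r * (m₁ + m₂ / 2)}
      ≤ ((gaussVec m₁).prod (gaussVec m₂)).real
        {ω | (r - 1) / 12 * (r * (m₁ + m₂ / 2)) ≤ (r - 1) / 12 * sqNormAddPosSqNorm ω} :=
        measureReal_mono fun ω hω => mul_le_mul_of_nonpos_left hω (by linarith : (r - 1) / 12 ≤ 0)
    _ ≤ _ := measureReal_le_mul_sqNormAddPosSqNorm_le (by linarith) _ m₁ m₂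
    _ = _ := by ring_nf

lemma measureReal_le_sqNormAddPosSqNorm_le {r : ℝ} (hr₁ : 1 ≤ r) (hr₄ : r ≤ 4) (m₁ m₂ : ℕ) :
    ((gaussVec m₁).prod (gaussVec m₂)).real {ω | r * (m₁ + m₂ / 2) ≤ sqNormAddPosSqNorm ω}
      ≤ exp (-((r - 1) ^ 2 / 18) * (m₁ + m₂ / 2)) := by
  calc ((gaussVec m₁).prod (gaussVec m₂)).real {ω | r * (m₁ + m₂ / 2) ≤ sqNormAddPosSqNorm ω}
      ≤ ((gaussVec m₁).prod (gaussVec m₂)).real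
        {ω | (r - 1) / 12 * (r * (m₁ + m₂ / 2)) ≤ (r - 1) / 12 * sqNormAddPosSqNorm ω} :=
        measureReal_mono fun ω hω => mul_le_mul_of_nonneg_left hω (by linarith : 0 ≤ (r - 1) / 12)
    _ ≤ _ := measureReal_le_mul_sqNormAddPosSqNorm_le (by linarith) _ m₁ m₂
    _ = _ := by ring_nf

lemma ofReal_one_sub_le_measure {Ω : Type*} [MeasurableSpace Ω] {μ : Measure Ω}
    [IsProbabilityMeasure μ] {s t : Set Ω} {e : ℝ} (hs : MeasurableSet s) (hst : sᶜ ⊆ t)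
    (he : μ.real s ≤ e) : ENNReal.ofReal (1 - e) ≤ μ t := by
  rw [← ofReal_measureReal]
  gcongr
  calc 1 - e ≤ 1 - μ.real s := by linarith
    _ = μ.real sᶜ := (probReal_compl_eq_one_sub hs).symm
    _ ≤ μ.real t := measureReal_mono hst

/-- Exponential concentration of `√(‖h_A‖₂² + ‖(h_B)₊‖₂²)` around `√(m₁ + m₂/2)` for
independent standard Gaussian vectors `h_A ∈ ℝ^{m₁}`, `h_B ∈ ℝ^{m₂}`. -/
theorem stmt_7 (ε₁ : ℝ) (hε₁ : 0 < ε₁ ∧ ε₁ < 1) :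
    ∃ ε₂ > (0 : ℝ), ∃ ε₂' > (0 : ℝ), ∀ m₁ m₂ : ℕ, 0 < m₁ → 0 < m₂ →
      (ENNReal.ofReal (1 - Real.exp (-ε₂ * ((m₁ : ℝ) + (m₂ : ℝ) / 2))) ≤
        ((gaussVec m₁).prod (gaussVec m₂))
          {ω : (Fin m₁ → ℝ) × (Fin m₂ → ℝ) |
            (1 - ε₁) * Real.sqrt ((m₁ : ℝ) + (m₂ : ℝ) / 2) <
              Real.sqrt ((∑ i, (ω.1 i) ^ 2) + ∑ j, (max (ω.2 j) 0) ^ 2)})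
      ∧
      (ENNReal.ofReal (1 - Real.exp (-ε₂' * ((m₁ : ℝ) + (m₂ : ℝ) / 2))) ≤
        ((gaussVec m₁).prod (gaussVec m₂))
          {ω : (Fin m₁ → ℝ) × (Fin m₂ → ℝ) |
            Real.sqrt ((∑ i, (ω.1 i) ^ 2) + ∑ j, (max (ω.2 j) 0) ^ 2) <
              (1 + ε₁) * Real.sqrt ((m₁ : ℝ) + (m₂ : ℝ) / 2)}) := by
  obtain ⟨hε₀, hε₁⟩ := hε₁
  refine ⟨((1 - ε₁) ^ 2 - 1) ^ 2 / 18, div_pos (sq_pos_of_neg (by nlinarith)) (by norm_num),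
    ((1 + ε₁) ^ 2 - 1) ^ 2 / 18, div_pos (sq_pos_of_pos (by nlinarith)) (by norm_num),
    fun m₁ m₂ _ _ => ⟨?_, ?_⟩⟩
  · refine ofReal_one_sub_le_measure (measurableSet_le (by fun_prop) (by fun_prop))
      (fun ω hω => ?_) (measureReal_sqNormAddPosSqNorm_le_le (by nlinarith) m₁ m₂)
    rw [Set.mem_compl_iff, Set.mem_ofPred, not_le] at hω
    rw [Set.mem_ofPred, ← sqrt_sq (by linarith : 0 ≤ 1 - ε₁), ← sqrt_mul (by positivity)]
    exact sqrt_lt_sqrt (by positivity) hω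
  · refine ofReal_one_sub_le_measure (measurableSet_le (by fun_prop) (by fun_prop))
      (fun ω hω => ?_) (measureReal_le_sqNormAddPosSqNorm_le (by nlinarith) (by nlinarith) m₁ m₂)
    rw [Set.mem_compl_iff, Set.mem_ofPred, not_le] at hω
    rw [Set.mem_ofPred, ← sqrt_sq (by linarith : 0 ≤ 1 + ε₁), ← sqrt_mul (by positivity)]
    exact sqrt_lt_sqrt (by positivity) hω
end

section
/- Let n be a positive integer, g ∈ ℝⁿ, and c ∈ ℝ with c < ‖g‖₂. Let 𝟙 ∈ ℝⁿ denote the all-ones vector. Then inf{ ⟨𝟙, x⟩ : x ∈ ℝⁿ, ‖x‖₂ ≤ 1 and ⟨g, x⟩ + c ≤ 0 } = sup{ −‖𝟙 + λ g‖₂ + λ c : λ ∈ ℝ, λ ≥ 0 }. -/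
/-!
Weak duality is Cauchy–Schwarz applied to the Lagrangian `⟪a + λ g, x⟫`. For strong duality we
exhibit a feasible `x` and a multiplier `λ ≥ 0` with equal values. If `x = -a / ‖a‖` is feasible,
`λ = 0` works. Otherwise `φ(λ) = ⟪g, a + λ g⟫ - c ‖a + λ g‖` is negative at `0` and grows like
`λ ‖g‖ (‖g‖ - c)`, so it has a root `λ ≥ 0`, and then `x = -(a + λ g) / ‖a + λ g‖` (or
`x = -c g / ‖g‖²` if `a + λ g = 0`) makes the constraint active and attains `-‖a + λ g‖ + λ c`.
-/

/-- Euclidean inner product on `Fin k → ℝ`. -/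
noncomputable def dotp {k : ℕ} (u v : Fin k → ℝ) : ℝ := ∑ i, u i * v i

/-- Euclidean norm on `Fin k → ℝ`. -/
noncomputable def norm2 {k : ℕ} (v : Fin k → ℝ) : ℝ := Real.sqrt (∑ i, v i ^ 2)

open RealInnerProductSpace

section InnerProductSpace

variable {E : Type*} [NormedAddCommGroup E] [InnerProductSpace ℝ E]

theorem neg_norm_add_smul_add_mul_le_inner {a g x : E} {c l : ℝ} (hx : ‖x‖ ≤ 1)
    (hgx : ⟪g, x⟫ + c ≤ 0) (hl : 0 ≤ l) : -‖a + l • g‖ + l * c ≤ ⟪a, x⟫ := by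
  have hlag : ⟪a + l • g, x⟫ = ⟪a, x⟫ + l * ⟪g, x⟫ := by
    rw [inner_add_left, real_inner_smul_left]
  have hcs : -‖a + l • g‖ ≤ ⟪a + l • g, x⟫ := calc
    -‖a + l • g‖ ≤ -(‖a + l • g‖ * ‖x‖) := by
      gcongr; exact mul_le_of_le_one_right (norm_nonneg _) hx
    _ ≤ ⟪a + l • g, x⟫ := neg_le_of_abs_le (abs_real_inner_le_norm _ _)
  linarith [mul_nonpos_of_nonneg_of_nonpos hl hgx]

theorem mul_norm_add_smul_sub_le (a g : E) (c : ℝ) {l : ℝ} (hl : 0 ≤ l) :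
    c * ‖a + l • g‖ - c * (l * ‖g‖) ≤ |c| * ‖a‖ := calc
  c * ‖a + l • g‖ - c * (l * ‖g‖) = c * (‖a + l • g‖ - ‖l • g‖) := by
    rw [norm_smul, Real.norm_of_nonneg hl]; ring
  _ ≤ |c| * |‖a + l • g‖ - ‖l • g‖| := by rw [← abs_mul]; exact le_abs_self _
  _ ≤ |c| * ‖a‖ := by
    gcongr; simpa using abs_norm_sub_norm_le (a + l • g) (l • g)

theorem exists_inner_add_smul_eq_mul_norm {a g : E} {c : ℝ} (hc : c < ‖g‖)
    (hga : ⟪g, a⟫ < c * ‖a‖) : ∃ l : ℝ, 0 ≤ l ∧ ⟪g, a + l • g⟫ = c * ‖a + l • g‖ := by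
  set φ : ℝ → ℝ := fun l => ⟪g, a + l • g⟫ - c * ‖a + l • g‖
  have hφ : ∀ l, φ l = ⟪g, a⟫ + l * ‖g‖ ^ 2 - c * ‖a + l • g‖ := fun l => by
    simp only [φ, inner_add_right, real_inner_smul_right, real_inner_self_eq_norm_sq]
  have hcs : -(‖g‖ * ‖a‖) ≤ ⟪g, a⟫ := neg_le_of_abs_le (abs_real_inner_le_norm _ _)
  have hg : 0 < ‖g‖ := by nlinarith [norm_nonneg a]
  -- beyond `L`, the growth `l * ‖g‖ * (‖g‖ - c)` of `φ` beats its initial deficit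
  set L := (‖g‖ + |c|) * ‖a‖ / (‖g‖ * (‖g‖ - c))
  have hL : L * (‖g‖ * (‖g‖ - c)) = (‖g‖ + |c|) * ‖a‖ :=
    div_mul_cancel₀ _ (mul_pos hg (sub_pos.2 hc)).ne'
  have hL0 : 0 ≤ L := by positivity
  have hφL : 0 ≤ φ L := by
    rw [hφ]; linarith [mul_norm_add_smul_sub_le a g c hL0]
  have hφ0 : φ 0 ≤ 0 := by
    rw [hφ]; simp only [zero_mul, add_zero, zero_smul]; linarith
  have hcont : Continuous φ := by fun_prop
  obtain ⟨l, ⟨hl, -⟩, hφl⟩ :=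
    intermediate_value_Icc hL0 hcont.continuousOn ⟨hφ0, hφL⟩
  exact ⟨l, hl, sub_eq_zero.1 hφl⟩

theorem exists_inner_eq_neg_norm_of_inner_eq_mul_norm {v g : E} {c : ℝ}
    (hgv : ⟪g, v⟫ = c * ‖v‖) (hc : |c| ≤ ‖g‖) :
    ∃ x : E, ‖x‖ ≤ 1 ∧ ⟪g, x⟫ = -c ∧ ⟪v, x⟫ = -‖v‖ := by
  rcases eq_or_ne v 0 with rfl | hv
  · rcases eq_or_ne g 0 with rfl | hg
    · exact ⟨0, by simp, by simpa using hc, by simp⟩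
    have hg' : 0 < ‖g‖ := norm_pos_iff.2 hg
    refine ⟨-(c / ‖g‖ ^ 2) • g, ?_, ?_, by simp⟩
    · rw [norm_smul, norm_neg, norm_div, norm_pow, norm_norm, Real.norm_eq_abs]
      rw [div_mul_eq_mul_div, pow_two, ← div_div, mul_div_cancel_right₀ _ hg'.ne']
      exact div_le_one_of_le₀ hc hg'.le
    · rw [real_inner_smul_right, real_inner_self_eq_norm_sq]
      field_simp
  · have hv' : 0 < ‖v‖ := norm_pos_iff.2 hv
    refine ⟨-‖v‖⁻¹ • v, ?_, ?_, ?_⟩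
    · rw [norm_smul, norm_neg, norm_inv, norm_norm, inv_mul_cancel₀ hv'.ne']
    · rw [real_inner_smul_right, hgv]; field_simp
    · rw [real_inner_smul_right, real_inner_self_eq_norm_sq]; field_simp

theorem exists_feasible_inner_eq_dual {a g : E} {c : ℝ} (ha : a ≠ 0) (hc : c < ‖g‖) :
    ∃ (x : E) (l : ℝ), ‖x‖ ≤ 1 ∧ ⟪g, x⟫ + c ≤ 0 ∧ 0 ≤ l ∧ ⟪a, x⟫ = -‖a + l • g‖ + l * c := by
  rcases le_or_gt (c * ‖a‖) ⟪g, a⟫ with hga | hga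
  · have ha' : 0 < ‖a‖ := norm_pos_iff.2 ha
    refine ⟨-‖a‖⁻¹ • a, 0, ?_, ?_, le_rfl, ?_⟩
    · rw [norm_smul, norm_neg, norm_inv, norm_norm, inv_mul_cancel₀ ha'.ne']
    · rw [real_inner_smul_right, neg_mul, ← div_eq_inv_mul, neg_add_nonpos_iff,
        le_div_iff₀ ha']
      exact hga
    · rw [real_inner_smul_right, real_inner_self_eq_norm_sq]; field_simp; simp
  · obtain ⟨l, hl, hgl⟩ := exists_inner_add_smul_eq_mul_norm hc hga
    have hcs : -(‖g‖ * ‖a‖) ≤ ⟪g, a⟫ := neg_le_of_abs_le (abs_real_inner_le_norm _ _)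
    have hc' : |c| ≤ ‖g‖ := abs_le.2 ⟨by nlinarith [norm_nonneg a], hc.le⟩
    obtain ⟨x, hx, hgx, hvx⟩ := exists_inner_eq_neg_norm_of_inner_eq_mul_norm hgl hc'
    refine ⟨x, l, hx, by linarith, hl, ?_⟩
    rw [inner_add_left, real_inner_smul_left, hgx] at hvx
    linarith

end InnerProductSpace

theorem norm2_eq_norm {k : ℕ} (v : Fin k → ℝ) :
    norm2 v = ‖(WithLp.toLp 2 v : EuclideanSpace ℝ (Fin k))‖ := by
  simp [norm2, EuclideanSpace.norm_eq]

theorem dotp_eq_inner {k : ℕ} (u v : Fin k → ℝ) :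
    dotp u v = ⟪(WithLp.toLp 2 u : EuclideanSpace ℝ (Fin k)), WithLp.toLp 2 v⟫ := by
  simp [dotp, PiLp.inner_apply, mul_comm]

/-- Strong Lagrange duality for minimizing `⟨𝟙,x⟩` over the intersection of the unit ball
with the halfspace `⟨g,x⟩ + c ≤ 0`, under the Slater condition `c < ‖g‖₂`:
`inf { Σᵢ xᵢ : ‖x‖₂ ≤ 1, ⟨g,x⟩ + c ≤ 0 } = sup { −‖𝟙 + λg‖₂ + λc : λ ≥ 0 }`. -/
theorem stmt_10 (n : ℕ) (hn : 0 < n) (g : Fin n → ℝ) (c : ℝ) (hc : c < norm2 g) :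
    sInf {y : ℝ | ∃ x : Fin n → ℝ, norm2 x ≤ 1 ∧ dotp g x + c ≤ 0 ∧ y = ∑ i, x i}
      = sSup {y : ℝ | ∃ l : ℝ, 0 ≤ l ∧
          y = -norm2 (fun i => 1 + l * g i) + l * c} := by
  set one : EuclideanSpace ℝ (Fin n) := WithLp.toLp 2 1
  have hsum (x : Fin n → ℝ) : ∑ i, x i = ⟪one, WithLp.toLp 2 x⟫ := by
    rw [← dotp_eq_inner]; simp [dotp]
  have hdual (l : ℝ) : norm2 (fun i => 1 + l * g i) = ‖one + l • WithLp.toLp 2 g‖ :=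
    norm2_eq_norm _
  have hone : one ≠ 0 := fun h => by
    simpa [one] using congrFun (congrArg WithLp.ofLp h) ⟨0, hn⟩
  rw [norm2_eq_norm] at hc
  obtain ⟨x, l, hx, hgx, hl, hval⟩ := exists_feasible_inner_eq_dual hone hc
  have hP : IsLeast {y : ℝ | ∃ x : Fin n → ℝ, norm2 x ≤ 1 ∧ dotp g x + c ≤ 0 ∧ y = ∑ i, x i}
      ⟪one, x⟫ := by
    refine ⟨⟨x.ofLp, by rwa [norm2_eq_norm], by rwa [dotp_eq_inner], (hsum _).symm⟩, ?_⟩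
    rintro _ ⟨y, hy, hgy, rfl⟩
    rw [norm2_eq_norm] at hy; rw [dotp_eq_inner] at hgy
    rw [hsum, hval]
    exact neg_norm_add_smul_add_mul_le_inner hy hgy hl
  have hD : IsGreatest {y : ℝ | ∃ l : ℝ, 0 ≤ l ∧ y = -norm2 (fun i => 1 + l * g i) + l * c}
      ⟪one, x⟫ := by
    refine ⟨⟨l, hl, by rw [hval, hdual]⟩, ?_⟩
    rintro _ ⟨m, hm, rfl⟩
    rw [hdual]
    exact neg_norm_add_smul_add_mul_le_inner hx hgx hm
  rw [hP.csInf_eq, hD.csSup_eq]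
end

section
/- Let n be a positive integer, 0 ≤ k ≤ n, and a ∈ ℝⁿ. Then inf{ Σ_{i=1}^{n−k} |xᵢ| + Σ_{i=n−k+1}^{n} xᵢ + ⟨a, x⟩ : x ∈ ℝⁿ, ‖x‖₂ ≤ 1 } = −√( Σ_{i=1}^{n−k} (max(|aᵢ| − 1, 0))² + Σ_{i=n−k+1}^{n} (1 + aᵢ)² ). -/
/-- `g` is positively homogeneous and never falls below `-β |t|`; the bound is attained at a
point `w` scaled so that `|w| = β`, which still makes sense when `β = 0`. -/
def HasDescentRate (g : ℝ → ℝ) (β : ℝ) : Prop :=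
  (∀ c t, 0 ≤ c → g (c * t) = c * g t) ∧ (∀ t, -(β * |t|) ≤ g t) ∧ ∃ w, |w| = β ∧ g w = -β ^ 2

lemma hasDescentRate_mul (γ : ℝ) : HasDescentRate (fun t => γ * t) |γ| := by
  refine ⟨fun c t _ => by ring, fun t => ?_, -γ, abs_neg γ, ?_⟩
  · rw [← abs_mul]; exact neg_abs_le _
  · simp only [sq_abs]; ring

lemma hasDescentRate_abs_add_mul (α : ℝ) :
    HasDescentRate (fun t => |t| + α * t) (max (|α| - 1) 0) := by
  refine ⟨fun c t hc => ?_, fun t => ?_, ?_⟩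
  · simp only [abs_mul, abs_of_nonneg hc]; ring
  · have : -(|α| * |t|) ≤ α * t := by rw [← abs_mul]; exact neg_abs_le _
    have : |α| - 1 ≤ max (|α| - 1) 0 := le_max_left _ _
    nlinarith [abs_nonneg t]
  · set β := max (|α| - 1) 0 with hβ
    have hβ0 : 0 ≤ β := le_max_right _ _
    have hβα : β * (1 - |α|) = -β ^ 2 := by
      rcases max_cases (|α| - 1) 0 with ⟨h, -⟩ | ⟨h, -⟩ <;> rw [← hβ] at h <;> rw [h] <;> ring
    rcases le_total 0 α with hα | hα
    · refine ⟨-β, by rw [abs_neg, abs_of_nonneg hβ0], ?_⟩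
      rw [abs_of_nonneg hα] at hβα
      simp only [abs_neg, abs_of_nonneg hβ0]; linarith
    · refine ⟨β, abs_of_nonneg hβ0, ?_⟩
      rw [abs_of_nonpos hα] at hβα
      simp only [abs_of_nonneg hβ0]; linarith

lemma dotp_le_norm2_mul_norm2 {n : ℕ} (u v : Fin n → ℝ) : dotp u v ≤ norm2 u * norm2 v :=
  Real.sum_mul_le_sqrt_mul_sqrt _ u v

lemma norm2_smul {n : ℕ} (c : ℝ) (v : Fin n → ℝ) : norm2 (c • v) = |c| * norm2 v := by
  simp only [norm2, Pi.smul_apply, smul_eq_mul, mul_pow, ← Finset.mul_sum,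
    Real.sqrt_mul (sq_nonneg c), Real.sqrt_sq_eq_abs]

lemma norm2_congr_abs {n : ℕ} {u v : Fin n → ℝ} (h : ∀ i, |u i| = |v i|) : norm2 u = norm2 v := by
  simp only [norm2, ← sq_abs (u _), h, sq_abs]

lemma isLeast_sum_of_hasDescentRate {n : ℕ} (g : Fin n → ℝ → ℝ) (β : Fin n → ℝ)
    (hg : ∀ i, HasDescentRate (g i) (β i)) :
    IsLeast {y | ∃ x : Fin n → ℝ, norm2 x ≤ 1 ∧ y = ∑ i, g i (x i)} (-norm2 β) := by
  choose hhom hlow w hw hgw using hg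
  set B := norm2 β
  have hB : 0 ≤ B := Real.sqrt_nonneg _
  have hwB : norm2 w = B := norm2_congr_abs fun i => by rw [hw, ← hw, abs_abs]
  refine ⟨⟨B⁻¹ • w, ?_, ?_⟩, ?_⟩
  · rw [norm2_smul, hwB, abs_of_nonneg (inv_nonneg.2 hB)]
    exact inv_mul_le_one_of_le₀ le_rfl hB
  · have hB2 : ∑ i, β i ^ 2 = B ^ 2 :=
      (Real.sq_sqrt (Finset.sum_nonneg fun i _ => sq_nonneg _)).symm
    simp only [Pi.smul_apply, smul_eq_mul, hhom _ _ _ (inv_nonneg.2 hB), hgw, mul_neg,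
      Finset.sum_neg_distrib, ← Finset.mul_sum, hB2]
    rcases eq_or_ne B 0 with h | h
    · simp [h]
    · field_simp
  · rintro y ⟨x, hx, rfl⟩
    have hxabs : norm2 (fun i => |x i|) = norm2 x := norm2_congr_abs fun i => abs_abs _
    calc -B ≤ -(B * norm2 x) := neg_le_neg (mul_le_of_le_one_right hB hx)
      _ ≤ -dotp β (fun i => |x i|) := by
        rw [← hxabs]; exact neg_le_neg (dotp_le_norm2_mul_norm2 _ _)
      _ = ∑ i, -(β i * |x i|) := by rw [dotp, Finset.sum_neg_distrib]
      _ ≤ ∑ i, g i (x i) := Finset.sum_le_sum fun i _ => hlow i (x i)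

theorem stmt_11_general (n k : ℕ) (a : Fin n → ℝ) :
    sInf {y : ℝ | ∃ x : Fin n → ℝ, norm2 x ≤ 1 ∧
        y = (∑ i : Fin n, if (i : ℕ) < n - k then |x i| else x i) + dotp a x}
      = -Real.sqrt (∑ i : Fin n,
          if (i : ℕ) < n - k then (max (|a i| - 1) 0) ^ 2 else (1 + a i) ^ 2) := by
  let g : Fin n → ℝ → ℝ := fun i =>
    if (i : ℕ) < n - k then fun t => |t| + a i * t else fun t => (1 + a i) * t
  let β : Fin n → ℝ := fun i => if (i : ℕ) < n - k then max (|a i| - 1) 0 else |1 + a i|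
  have hg : ∀ i, HasDescentRate (g i) (β i) := fun i => by
    unfold g β; split_ifs
    exacts [hasDescentRate_abs_add_mul _, hasDescentRate_mul _]
  have hobj : ∀ x : Fin n → ℝ,
      (∑ i : Fin n, if (i : ℕ) < n - k then |x i| else x i) + dotp a x = ∑ i, g i (x i) := by
    intro x
    rw [dotp, ← Finset.sum_add_distrib]
    refine Finset.sum_congr rfl fun i _ => ?_
    unfold g; split_ifs <;> ring
  have hβ : norm2 β = Real.sqrt (∑ i : Fin n,
      if (i : ℕ) < n - k then (max (|a i| - 1) 0) ^ 2 else (1 + a i) ^ 2) := by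
    unfold norm2 β; congr 1
    refine Finset.sum_congr rfl fun i _ => ?_
    split_ifs <;> simp only [sq_abs]
  simp only [hobj, ← hβ]
  exact (isLeast_sum_of_hasDescentRate g β hg).csInf_eq

/-- Closed-form evaluation of the minimization over the unit ball:
`inf { Σ_{i=1}^{n−k}|xᵢ| + Σ_{i=n−k+1}^{n} xᵢ + ⟨a,x⟩ : ‖x‖₂ ≤ 1 }
  = −√( Σ_{i=1}^{n−k} (max(|aᵢ|−1,0))² + Σ_{i=n−k+1}^{n} (1+aᵢ)² )`. -/
theorem stmt_11 (n k : ℕ) (hn : 0 < n) (hk : k ≤ n) (a : Fin n → ℝ) :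
    sInf {y : ℝ | ∃ x : Fin n → ℝ, norm2 x ≤ 1 ∧
        y = (∑ i : Fin n, if (i : ℕ) < n - k then |x i| else x i) + dotp a x}
      = -Real.sqrt (∑ i : Fin n,
          if (i : ℕ) < n - k then (max (|a i| - 1) 0) ^ 2 else (1 + a i) ^ 2) :=
  stmt_11_general n k a
end
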